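/- (Wintner orthogonal decomposition for F) Let F: ℕ → ℂ have all Wintner coefficients Win_q F. Then for every a ∈ ℕ and every prime P ≥ a, F(a) = ∑_{q P-smooth} (Win_q F) c_q(a) − ∑_{d | a} ∑_{r P-sifted, r > 1} F'(dr)/r. -/

import Mathlib

open scoped BigOperators Classical
open Filter

/-- `n` is `P`-smooth: every prime factor of `n` is at most `P`. -/
def IsSmooth (P n : ℕ) : Prop := ∀ p : ℕ, p.Prime → p ∣ n → p ≤ P

/-- `n` is `P`-sifted: every prime factor of `n` exceeds `P`. -/
def IsSifted (P n : ℕ) : Prop := ∀ p : ℕ, p.Prime → p ∣ n → P < p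

/-- The Ramanujan sum `c_q(a)`, via Kluyver's formula. -/
noncomputable def ramanujanSum (q a : ℕ) : ℤ :=
  ∑ d ∈ (Nat.gcd a q).divisors, (d : ℤ) * ArithmeticFunction.moebius (q / d)

/-- The Eratosthenes transform `F' = F ∗ μ`. -/
noncomputable def eratosthenes (F : ℕ → ℂ) (d : ℕ) : ℂ :=
  ∑ e ∈ d.divisors, (ArithmeticFunction.moebius (d / e) : ℂ) * F e

/-! Let `Q = P#`. Since `∑_{m ∣ (Q, r)} μ(m)` is the indicator of `P`-sifted `r`, the partial sums
of `∑_{r sifted} F'(dr)/r` are a finite combination `∑_{m ∣ Q} μ(m) d (Wintner partial sum for dm)`,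
so they converge to `∑_{m ∣ Q} μ(m) d W(dm)`. On the other side, Kluyver's formula shows that
`c_q(a) = 0` for `P`-smooth `q ∤ aQ`, and expanding the remaining finite sum over `q ∣ aQ` gives
`∑_{e ∣ a} ∑_{m ∣ Q} μ(m) e W(em)` again, because every squarefree smooth `m` divides `Q`.
What is left is `∑_{d ∣ a} F'(d) = F(a)`. -/

open ArithmeticFunction Finset
open scoped ArithmeticFunction.Moebius

lemma IsSmooth.of_dvd {P m n : ℕ} (hn : IsSmooth P n) (hmn : m ∣ n) : IsSmooth P m :=
  fun p hp hpm => hn p hp (hpm.trans hmn)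

lemma IsSmooth.mul {P m n : ℕ} (hm : IsSmooth P m) (hn : IsSmooth P n) : IsSmooth P (m * n) :=
  fun p hp hpmn => ((Nat.Prime.dvd_mul hp).mp hpmn).elim (hm p hp) (hn p hp)

lemma isSmooth_of_le {P n : ℕ} (hn : 0 < n) (hnP : n ≤ P) : IsSmooth P n :=
  fun _ _ hpn => (Nat.le_of_dvd hn hpn).trans hnP

lemma isSmooth_primorial (P : ℕ) : IsSmooth P (primorial P) :=
  fun _ hp hpP => hp.dvd_primorial_iff.mp hpP

lemma Squarefree.dvd_primorial_of_isSmooth {P n : ℕ} (hn : Squarefree n) (hs : IsSmooth P n) :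
    n ∣ primorial P := by
  rw [← Nat.prod_primeFactors_of_squarefree hn]
  refine (Nat.prod_primeFactors_dvd_iff (primorial_ne_zero P)).mpr fun p hp => ?_
  have hpp := Nat.prime_of_mem_primeFactors hp
  exact Nat.mem_primeFactors.mpr ⟨hpp, hpp.dvd_primorial_iff.mpr
    (hs p hpp (Nat.dvd_of_mem_primeFactors hp)), primorial_ne_zero P⟩

lemma isSifted_one (P : ℕ) : IsSifted P 1 :=
  fun _ hp hp1 => absurd (Nat.dvd_one.mp hp1) hp.ne_one

lemma isSifted_iff_coprime_primorial {P n : ℕ} : IsSifted P n ↔ Nat.Coprime (primorial P) n := by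
  constructor
  · intro hn
    refine Nat.coprime_of_dvd fun p hp hpP hpn => ?_
    exact (hn p hp hpn).not_ge (hp.dvd_primorial_iff.mp hpP)
  · intro hcop p hp hpn
    by_contra! hpP
    exact (hp.coprime_iff_not_dvd.mp
      (hcop.coprime_dvd_left (hp.dvd_primorial_iff.mpr hpP))) hpn

lemma sum_divisors_moebius {R : Type*} [Ring R] (n : ℕ) :
    ∑ m ∈ n.divisors, (μ m : R) = if n = 1 then 1 else 0 := by
  simp_rw [← intCoe_apply (R := R)]
  rw [← coe_mul_zeta_apply, coe_moebius_mul_coe_zeta, one_apply]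

lemma Nat.divisors_filter_dvd_eq_divisors_gcd {n k : ℕ} (hn : n ≠ 0) :
    {m ∈ n.divisors | m ∣ k} = (n.gcd k).divisors := by
  ext m
  simp [Nat.dvd_gcd_iff, hn]

lemma ite_isSifted_eq_sum_moebius {R : Type*} [Ring R] (P r : ℕ) :
    (if IsSifted P r then 1 else 0 : R) = ∑ m ∈ (primorial P).divisors with m ∣ r, (μ m : R) := by
  rw [Nat.divisors_filter_dvd_eq_divisors_gcd (primorial_ne_zero P), sum_divisors_moebius]
  simp only [isSifted_iff_coprime_primorial, Nat.Coprime]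

lemma ramanujanSum_eq_sum_filter {q a : ℕ} (ha : a ≠ 0) :
    ramanujanSum q a = ∑ e ∈ a.divisors with e ∣ q, (e : ℤ) * μ (q / e) := by
  rw [ramanujanSum, Nat.divisors_filter_dvd_eq_divisors_gcd ha]

lemma ramanujanSum_eq_zero_of_not_dvd {P q a : ℕ} (hq : IsSmooth P q)
    (hqa : ¬ q ∣ a * primorial P) : ramanujanSum q a = 0 := by
  rw [ramanujanSum]
  refine sum_eq_zero fun e he => ?_
  have hea : e ∣ a := (Nat.dvd_of_mem_divisors he).trans (Nat.gcd_dvd_left a q)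
  have heq : e ∣ q := (Nat.dvd_of_mem_divisors he).trans (Nat.gcd_dvd_right a q)
  suffices ¬ Squarefree (q / e) by rw [moebius_eq_zero_of_not_squarefree this, mul_zero]
  intro hsq
  apply hqa
  rw [← Nat.mul_div_cancel' heq]
  exact mul_dvd_mul hea (hsq.dvd_primorial_of_isSmooth (hq.of_dvd (Nat.div_dvd_of_dvd heq)))

lemma sum_Icc_dvd_mul {M : Type*} [AddCommMonoid M] (g : ℕ → M) {d : ℕ} (hd : 0 < d) (m x : ℕ) :
    ∑ n ∈ Icc 1 (d * x), (if d * m ∣ n then g n else 0)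
      = ∑ r ∈ Icc 1 x, if m ∣ r then g (d * r) else 0 := by
  have himage : {n ∈ Icc 1 (d * x) | d * m ∣ n} = image (d * ·) {r ∈ Icc 1 x | m ∣ r} := by
    ext n
    simp only [mem_filter, mem_Icc, mem_image]
    constructor
    · rintro ⟨⟨hn1, hnx⟩, k, rfl⟩
      refine ⟨m * k, ⟨⟨?_, ?_⟩, dvd_mul_right m k⟩, by ring⟩
      · refine Nat.one_le_iff_ne_zero.mpr fun h => ?_
        rw [mul_assoc, h, mul_zero] at hn1
        omega
      · rw [mul_assoc] at hnx
        exact Nat.le_of_mul_le_mul_left hnx hd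
    · rintro ⟨r, ⟨⟨hr1, hrx⟩, hmr⟩, rfl⟩
      exact ⟨⟨Nat.one_le_iff_ne_zero.mpr (by positivity), Nat.mul_le_mul_left d hrx⟩,
        mul_dvd_mul_left d hmr⟩
  rw [← sum_filter, ← sum_filter, himage, sum_image fun r _ s _ h => Nat.eq_of_mul_eq_mul_left hd h]

lemma tendsto_sum_Icc_dvd_mul {f : ℕ → ℂ} {w : ℂ} {d m : ℕ} (hd : 0 < d)
    (hw : Tendsto (fun x : ℕ => ∑ n ∈ Icc 1 x, if d * m ∣ n then f n / n else 0) atTop (nhds w)) :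
    Tendsto (fun x : ℕ => ∑ r ∈ Icc 1 x, if m ∣ r then f (d * r) / r else 0)
      atTop (nhds (d * w)) := by
  convert (hw.comp (tendsto_id.const_mul_atTop' hd)).const_mul (d : ℂ) using 1
  funext x
  have hd' : (d : ℂ) ≠ 0 := by exact_mod_cast hd.ne'
  simp only [Function.comp_apply, id, sum_Icc_dvd_mul _ hd, mul_sum, mul_ite, mul_zero]
  refine sum_congr rfl fun r _ => ?_
  push_cast
  split_ifs <;> field_simp

lemma tendsto_sum_isSifted {f w : ℕ → ℂ}
    (hw : ∀ q : ℕ, 0 < q →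
      Tendsto (fun x : ℕ => ∑ n ∈ Icc 1 x, if q ∣ n then f n / n else 0) atTop (nhds (w q)))
    (P : ℕ) {d : ℕ} (hd : 0 < d) :
    Tendsto (fun x : ℕ => ∑ r ∈ Icc 1 x, if IsSifted P r then f (d * r) / r else 0)
      atTop (nhds (∑ m ∈ (primorial P).divisors, μ m * (d * w (d * m)))) := by
  have hsieve : ∀ x : ℕ, (∑ r ∈ Icc 1 x, if IsSifted P r then f (d * r) / r else 0)
      = ∑ m ∈ (primorial P).divisors, μ m * ∑ r ∈ Icc 1 x, if m ∣ r then f (d * r) / r else 0 := by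
    intro x
    simp_rw [mul_sum, mul_ite, mul_zero]
    rw [sum_comm]
    refine sum_congr rfl fun r _ => ?_
    rw [← boole_mul, ite_isSifted_eq_sum_moebius, sum_filter, sum_mul]
    simp only [ite_mul, zero_mul]
  simp_rw [hsieve]
  refine tendsto_finsetSum _ fun m hm => (tendsto_sum_Icc_dvd_mul hd (hw _ ?_)).const_mul _
  exact Nat.mul_pos hd (Nat.pos_of_mem_divisors hm)

lemma Nat.sum_divisors_filter_dvd {M : Type*} [AddCommMonoid M] (g : ℕ → M) {e n : ℕ} (hn : n ≠ 0)
    (hen : e ∣ n) : ∑ q ∈ n.divisors with e ∣ q, g q = ∑ m ∈ (n / e).divisors, g (e * m) := by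
  have he : 0 < e := Nat.pos_of_ne_zero (ne_zero_of_dvd_ne_zero hn hen)
  have himage : {q ∈ n.divisors | e ∣ q} = image (e * ·) (n / e).divisors := by
    ext q
    simp only [mem_filter, Nat.mem_divisors, mem_image]
    constructor
    · rintro ⟨⟨hqn, -⟩, m, rfl⟩
      exact ⟨m, ⟨Nat.dvd_div_of_mul_dvd hqn, (Nat.div_pos (Nat.le_of_dvd (by omega) hen) he).ne'⟩,
        rfl⟩
    · rintro ⟨m, ⟨hmn, -⟩, rfl⟩
      exact ⟨⟨(Nat.dvd_div_iff_mul_dvd hen).mp hmn, hn⟩, dvd_mul_right e m⟩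
  rw [himage, sum_image fun r _ s _ h => Nat.eq_of_mul_eq_mul_left he h]

lemma sum_divisors_moebius_mul_eq_of_dvd {M : Type*} [AddCommGroup M] (g : ℕ → M) {k n : ℕ}
    (hn : n ≠ 0) (hkn : k ∣ n) (hsq : ∀ m, m ∣ n → Squarefree m → m ∣ k) :
    ∑ m ∈ n.divisors, μ m • g m = ∑ m ∈ k.divisors, μ m • g m := by
  refine (sum_subset (Nat.divisors_subset_of_dvd hn hkn) fun m hmn hmk => ?_).symm
  have : ¬ Squarefree m := fun h =>
    hmk (Nat.mem_divisors.mpr ⟨hsq m (Nat.dvd_of_mem_divisors hmn) h, ne_zero_of_dvd_ne_zero hn hkn⟩)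
  rw [moebius_eq_zero_of_not_squarefree this, zero_smul]

lemma tsum_isSmooth_eq_sum_divisors (w : ℕ → ℂ) {P a : ℕ} (ha : a ≠ 0) (has : IsSmooth P a) :
    ∑' q : {q : ℕ // 0 < q ∧ IsSmooth P q}, w q * (ramanujanSum q a : ℂ)
      = ∑ q ∈ (a * primorial P).divisors, w q * (ramanujanSum q a : ℂ) := by
  have hN : a * primorial P ≠ 0 := mul_ne_zero ha (primorial_ne_zero P)
  refine (tsum_subtype {q : ℕ | 0 < q ∧ IsSmooth P q} fun q => w q * (ramanujanSum q a : ℂ)).trans ?_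
  rw [tsum_eq_sum fun q hq => ?_]
  · refine sum_congr rfl fun q hq => Set.indicator_of_mem ?_ _
    exact ⟨Nat.pos_of_mem_divisors hq,
      (has.mul (isSmooth_primorial P)).of_dvd (Nat.dvd_of_mem_divisors hq)⟩
  · refine Set.indicator_apply_eq_zero.mpr fun hqs => ?_
    rw [ramanujanSum_eq_zero_of_not_dvd hqs.2 fun h => hq (Nat.mem_divisors.mpr ⟨h, hN⟩)]
    simp

lemma sum_divisors_mul_primorial_ramanujanSum (w : ℕ → ℂ) {P a : ℕ} (ha : a ≠ 0)
    (has : IsSmooth P a) :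
    ∑ q ∈ (a * primorial P).divisors, w q * (ramanujanSum q a : ℂ)
      = ∑ e ∈ a.divisors, ∑ m ∈ (primorial P).divisors, μ m * (e * w (e * m)) := by
  have hN : a * primorial P ≠ 0 := mul_ne_zero ha (primorial_ne_zero P)
  calc ∑ q ∈ (a * primorial P).divisors, w q * (ramanujanSum q a : ℂ)
      = ∑ q ∈ (a * primorial P).divisors, ∑ e ∈ a.divisors with e ∣ q, w q * (e * μ (q / e)) := by
        simp only [ramanujanSum_eq_sum_filter ha]
        push_cast
        simp only [mul_sum]
    _ = ∑ e ∈ a.divisors, ∑ q ∈ (a * primorial P).divisors with e ∣ q, w q * (e * μ (q / e)) := by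
        refine sum_comm' fun q e => ?_
        simp only [mem_filter, Nat.mem_divisors]
        tauto
    _ = ∑ e ∈ a.divisors, ∑ m ∈ (a * primorial P / e).divisors, μ m * (e * w (e * m)) := by
        refine sum_congr rfl fun e he => ?_
        rw [Nat.sum_divisors_filter_dvd _ hN ((Nat.dvd_of_mem_divisors he).mul_right _)]
        refine sum_congr rfl fun m _ => ?_
        rw [Nat.mul_div_cancel_left m (Nat.pos_of_mem_divisors he)]
        ring
    _ = ∑ e ∈ a.divisors, ∑ m ∈ (primorial P).divisors, μ m * (e * w (e * m)) := by
        refine sum_congr rfl fun e he => ?_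
        have hquot : a * primorial P / e = a / e * primorial P :=
          Nat.mul_div_right_comm (Nat.dvd_of_mem_divisors he) _
        have hae : a / e ≠ 0 :=
          (Nat.div_pos (Nat.divisor_le he) (Nat.pos_of_mem_divisors he)).ne'
        simp only [← zsmul_eq_mul]
        refine sum_divisors_moebius_mul_eq_of_dvd _ (by simp [hquot, hae, primorial_ne_zero])
          (hquot ▸ dvd_mul_left _ _) fun m hm hsq => hsq.dvd_primorial_of_isSmooth ?_
        exact (has.mul (isSmooth_primorial P)).of_dvd (hm.trans (Nat.div_dvd_of_dvd
          ((Nat.dvd_of_mem_divisors he).mul_right _)))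

lemma sum_divisors_eratosthenes (F : ℕ → ℂ) {a : ℕ} (ha : 0 < a) :
    ∑ d ∈ a.divisors, eratosthenes F d = F a := by
  refine sum_eq_iff_sum_mul_moebius_eq.mpr (fun n _ => ?_) a ha
  rw [Nat.sum_divisorsAntidiagonal' (f := fun x y => (μ x : ℂ) * F y)]
  rfl

lemma tendsto_sum_Icc_two_isSifted {f w : ℕ → ℂ}
    (hw : ∀ q : ℕ, 0 < q →
      Tendsto (fun x : ℕ => ∑ n ∈ Icc 1 x, if q ∣ n then f n / n else 0) atTop (nhds (w q)))
    (P : ℕ) {d : ℕ} (hd : 0 < d) :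
    Tendsto (fun x : ℕ => ∑ r ∈ Icc 2 x, if IsSifted P r then f (d * r) / r else 0)
      atTop (nhds (∑ m ∈ (primorial P).divisors, μ m * (d * w (d * m)) - f d)) := by
  refine ((tendsto_sum_isSifted hw P hd).sub_const (f d)).congr' ?_
  filter_upwards [eventually_ge_atTop 1] with x hx
  have hIoc : Ioc 1 x = Icc 2 x := by ext; simp only [mem_Ioc, mem_Icc]; omega
  rw [← add_sum_Ioc_eq_sum_Icc hx, if_pos (isSifted_one P), hIoc]
  simp

theorem stmt8_general (F : ℕ → ℂ) (W : ℕ → ℂ)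
    (hW : ∀ q : ℕ, 0 < q →
      Tendsto (fun x : ℕ => ∑ d ∈ Finset.Icc 1 x, if q ∣ d then eratosthenes F d / d else 0)
        atTop (nhds (W q)))
    (a : ℕ) (ha : 0 < a) (P : ℕ) (haP : a ≤ P) :
    ∃ I : ℕ → ℂ,
      (∀ d ∈ a.divisors,
        Tendsto
          (fun x : ℕ =>
            ∑ r ∈ Finset.Icc 2 x, if IsSifted P r then eratosthenes F (d * r) / r else 0)
          atTop (nhds (I d))) ∧
      F a = (∑' q : {q : ℕ // 0 < q ∧ IsSmooth P q}, W (q : ℕ) * (ramanujanSum (q : ℕ) a : ℂ))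
              - ∑ d ∈ a.divisors, I d := by
  refine ⟨fun d => ∑ m ∈ (primorial P).divisors, μ m * (d * W (d * m)) - eratosthenes F d,
    fun d hd => tendsto_sum_Icc_two_isSifted hW P (Nat.pos_of_mem_divisors hd), ?_⟩
  have has : IsSmooth P a := isSmooth_of_le ha haP
  rw [tsum_isSmooth_eq_sum_divisors W ha.ne' has,
    sum_divisors_mul_primorial_ramanujanSum W ha.ne' has, sum_sub_distrib,
    sum_divisors_eratosthenes F ha, sub_sub_cancel]

/-- (Wintner orthogonal decomposition for `F`.) If all Wintner coefficients
`W q` exist, then for every `a ≥ 1` and every prime `P ≥ a`, the irregular series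
`Irr_d = ∑_{r P-sifted, r>1} F'(dr)/r` converge for each `d | a` and
`F(a) = ∑_{q P-smooth} W(q) c_q(a) − ∑_{d | a} Irr_d`. -/
theorem stmt8 (F : ℕ → ℂ) (W : ℕ → ℂ)
    (hW : ∀ q : ℕ, 0 < q →
      Tendsto (fun x : ℕ => ∑ d ∈ Finset.Icc 1 x, if q ∣ d then eratosthenes F d / d else 0)
        atTop (nhds (W q)))
    (a : ℕ) (ha : 0 < a) (P : ℕ) (hP : P.Prime) (haP : a ≤ P) :
    ∃ I : ℕ → ℂ,
      (∀ d ∈ a.divisors,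
        Tendsto
          (fun x : ℕ =>
            ∑ r ∈ Finset.Icc 2 x, if IsSifted P r then eratosthenes F (d * r) / r else 0)
          atTop (nhds (I d))) ∧
      F a = (∑' q : {q : ℕ // 0 < q ∧ IsSmooth P q}, W (q : ℕ) * (ramanujanSum (q : ℕ) a : ℂ))
              - ∑ d ∈ a.divisors, I d :=
  stmt8_general F W hW a ha P haP
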